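/- arXiv:2501.01923 — 3 statements merged into one kernel-verified Lean document; each statement's English description precedes it below -/
import Mathlib

section
/- Let k : ℝ → ℝ be continuous with k ≥ −K² for some constant K > 0. If w : ℝ → ℝ is a C¹ solution of the Riccati equation w' + w² + k = 0 defined on all of ℝ, then |w(t)| ≤ K for all t ∈ ℝ. -/
/-!
Below the level `-K` the equation gives `w' ≤ K² - w² < 0`, so a solution that drops below `-K`
stays below its value there; on that half-line `1 / w` is negative and has derivative
`1 + k / w² ≥ 1 - K² / w(t₀)² > 0`, so it becomes positive in finite time, i.e. `w` blows up.
Hence a global solution satisfies `-K ≤ w`, and the reflection `t ↦ -w (-t)`, which preserves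
the equation, turns this into `w ≤ K`.
-/

open Set

def IsRiccatiSolution (k w : ℝ → ℝ) : Prop :=
  ∀ t, HasDerivAt w (-w t ^ 2 - k t) t

namespace IsRiccatiSolution

variable {k w : ℝ → ℝ} {K t₀ : ℝ}

theorem reflect (hw : IsRiccatiSolution k w) :
    IsRiccatiSolution (fun t ↦ k (-t)) (fun t ↦ -w (-t)) := fun t ↦
  ((hw (-t)).comp t (hasDerivAt_neg t)).fun_neg.congr_deriv (by ring)

theorem le_of_lt_neg (hw : IsRiccatiSolution k w) (hK : 0 ≤ K) (hbound : ∀ t, -K ^ 2 ≤ k t)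
    (ht₀ : w t₀ < -K) : ∀ t ≥ t₀, w t ≤ w t₀ := by
  intro t ht
  have hsq : K ^ 2 < w t₀ ^ 2 := by nlinarith
  refine image_le_of_deriv_right_lt_deriv_boundary (B := fun _ ↦ w t₀)
    (fun x _ ↦ (hw x).continuousAt.continuousWithinAt) (fun x _ ↦ (hw x).hasDerivWithinAt) le_rfl
    (fun x ↦ hasDerivAt_const x (w t₀)) ?_ ⟨ht, le_rfl⟩
  intro x _ hx
  linarith [hbound x, hx ▸ hsq]

theorem mul_sub_le_inv_sub (hw : IsRiccatiSolution k w) (hbound : ∀ t, -K ^ 2 ≤ k t) {c : ℝ}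
    (hc : 0 < c) (hle : ∀ t ≥ t₀, w t ≤ -c) :
    ∀ t ≥ t₀, (1 - K ^ 2 / c ^ 2) * (t - t₀) ≤ (w t)⁻¹ - (w t₀)⁻¹ := by
  have hne : ∀ t ≥ t₀, w t ≠ 0 := fun t ht ↦ (lt_of_le_of_lt (hle t ht) (neg_neg_of_pos hc)).ne
  have hderiv : ∀ t ≥ t₀, HasDerivAt (fun s ↦ (w s)⁻¹) (-(-w t ^ 2 - k t) / w t ^ 2) t :=
    fun t ht ↦ (hw t).fun_inv (hne t ht)
  intro t ht
  refine (convex_Ici t₀).mul_sub_le_image_sub_of_le_deriv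
    (fun x hx ↦ (hderiv x hx).continuousAt.continuousWithinAt)
    (fun x hx ↦ (hderiv x (interior_subset hx)).differentiableAt.differentiableWithinAt)
    ?_ t₀ self_mem_Ici t ht ht
  intro x hx_int
  have hx : t₀ ≤ x := interior_subset hx_int
  have hwx : 0 < w x ^ 2 := by positivity [hne x hx]
  have hcx : c ^ 2 ≤ w x ^ 2 := by nlinarith [hle x hx]
  calc 1 - K ^ 2 / c ^ 2 ≤ 1 - K ^ 2 / w x ^ 2 := by gcongr
    _ = (w x ^ 2 - K ^ 2) / w x ^ 2 := one_sub_div hwx.ne'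
    _ ≤ (w x ^ 2 + k x) / w x ^ 2 := by gcongr; linarith [hbound x]
    _ = deriv (fun s ↦ (w s)⁻¹) x := by rw [(hderiv x hx).deriv]; ring

theorem neg_le (hw : IsRiccatiSolution k w) (hK : 0 ≤ K) (hbound : ∀ t, -K ^ 2 ≤ k t) (t₀ : ℝ) :
    -K ≤ w t₀ := by
  by_contra! ht₀
  set c := -w t₀
  have hc : 0 < c := by linarith
  have hε : 0 < 1 - K ^ 2 / c ^ 2 := by
    rw [sub_pos, div_lt_one (by positivity)]
    nlinarith
  have hstay : ∀ t ≥ t₀, w t ≤ -c := fun t ht ↦ by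
    linarith [hw.le_of_lt_neg hK hbound ht₀ t ht]
  have hinv_neg : ∀ t ≥ t₀, (w t)⁻¹ < 0 := fun t ht ↦
    inv_lt_zero.mpr ((hstay t ht).trans_lt (by linarith))
  -- the time at which the linear lower bound for `1 / w` reaches `0`
  set T := t₀ - (w t₀)⁻¹ / (1 - K ^ 2 / c ^ 2)
  have hT : t₀ ≤ T := by
    have := div_nonpos_of_nonpos_of_nonneg (hinv_neg t₀ le_rfl).le hε.le
    linarith
  have hgrowth := hw.mul_sub_le_inv_sub hbound hc hstay T hT
  have hreach : (1 - K ^ 2 / c ^ 2) * (T - t₀) = -(w t₀)⁻¹ := by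
    rw [sub_sub_cancel_left, mul_neg, mul_div_cancel₀ _ hε.ne']
  linarith [hinv_neg T hT]

end IsRiccatiSolution

theorem stmt_2_general (k : ℝ → ℝ) (K : ℝ) (hK : 0 < K)
    (hbound : ∀ t, -K ^ 2 ≤ k t)
    (w : ℝ → ℝ) (hw : ContDiff ℝ 1 w)
    (hric : ∀ t, deriv w t + w t ^ 2 + k t = 0) :
    ∀ t, |w t| ≤ K := by
  have hsol : IsRiccatiSolution k w := fun t ↦
    ((hw.differentiable one_ne_zero) t).hasDerivAt.congr_deriv (by linarith [hric t])
  intro t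
  have hupper := hsol.reflect.neg_le hK.le (fun s ↦ hbound (-s)) (-t)
  simp only [neg_neg, neg_le_neg_iff] at hupper
  exact abs_le.mpr ⟨hsol.neg_le hK.le hbound t, hupper⟩

/-- Riccati comparison: if `k ≥ -K²` and `w` is a global `C¹` solution of
`w' + w² + k = 0`, then `|w| ≤ K`. -/
theorem stmt_2 (k : ℝ → ℝ) (hk : Continuous k) (K : ℝ) (hK : 0 < K)
    (hbound : ∀ t, -K ^ 2 ≤ k t)
    (w : ℝ → ℝ) (hw : ContDiff ℝ 1 w)
    (hric : ∀ t, deriv w t + w t ^ 2 + k t = 0) :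
    ∀ t, |w t| ≤ K :=
  stmt_2_general k K hK hbound w hw hric
end

section
/- Let r_s, r_u, V, κ₀ : ℝ → ℝ be differentiable functions each satisfying the Riccati equation r² + V r + κ₀ − r' = 0. Then w := −(r_s + r_u)/2 satisfies w² − V w + κ₀ + w' = −(1/4)(r_s − r_u)². In particular, if r_s(t) ≠ r_u(t) for all t, then w² − V w + κ₀ + w' < 0 everywhere. -/
/-! Adding the Riccati equations for `r_s` and `r_u` and halving gives
`κ_w = (r_s + r_u)²/4 - (r_s² + r_u²)/2 = -(r_s - r_u)²/4`: the quadratic terms of the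
two solutions do not cancel, and what is left is minus a square. -/

theorem midpoint_riccati_identity {K : Type*} [Field K] [CharZero K]
    {a b v k da db : K} (ha : a ^ 2 + v * a + k - da = 0) (hb : b ^ 2 + v * b + k - db = 0) :
    (-(a + b) / 2) ^ 2 - v * (-(a + b) / 2) + k + -(da + db) / 2 = -(1 / 4) * (a - b) ^ 2 := by
  linear_combination (1 / 2 : K) * (ha + hb)

theorem deriv_neg_add_div_two {𝕜 : Type*} [NontriviallyNormedField 𝕜] {f g : 𝕜 → 𝕜} {t : 𝕜}
    (hf : DifferentiableAt 𝕜 f t) (hg : DifferentiableAt 𝕜 g t) :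
    deriv (fun s => -(f s + g s) / 2) t = -(deriv f t + deriv g t) / 2 :=
  ((hf.hasDerivAt.add hg.hasDerivAt).neg.div_const 2).deriv

/-- The curvature `κ_w` of the paper after the gauge change by `w`. -/
noncomputable def gaugeCurvature (V κ₀ w : ℝ → ℝ) (t : ℝ) : ℝ :=
  w t ^ 2 - V t * w t + κ₀ t + deriv w t

theorem gaugeCurvature_midpoint {rs ru V κ₀ : ℝ → ℝ} {t : ℝ}
    (hrs : DifferentiableAt ℝ rs t) (hru : DifferentiableAt ℝ ru t)
    (heqs : rs t ^ 2 + V t * rs t + κ₀ t - deriv rs t = 0)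
    (hequ : ru t ^ 2 + V t * ru t + κ₀ t - deriv ru t = 0) :
    gaugeCurvature V κ₀ (fun s => -(rs s + ru s) / 2) t = -(1 / 4) * (rs t - ru t) ^ 2 := by
  rw [gaugeCurvature, deriv_neg_add_div_two hrs hru]
  exact midpoint_riccati_identity heqs hequ

/-- If `r_s`, `r_u` both solve `r² + V r + κ₀ - r' = 0`, then `w = -(r_s + r_u)/2`
satisfies `w² - V w + κ₀ + w' = -(1/4)(r_s - r_u)²`; in particular, if
`r_s ≠ r_u` everywhere, the gauged curvature `κ_w` is everywhere negative. -/
theorem stmt_15 (rs ru V κ₀ : ℝ → ℝ)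
    (hrs : Differentiable ℝ rs) (hru : Differentiable ℝ ru)
    (heqs : ∀ t, rs t ^ 2 + V t * rs t + κ₀ t - deriv rs t = 0)
    (hequ : ∀ t, ru t ^ 2 + V t * ru t + κ₀ t - deriv ru t = 0) :
    (∀ t, (fun s => -(rs s + ru s) / 2) t ^ 2 - V t * (-(rs t + ru t) / 2) + κ₀ t
        + deriv (fun s => -(rs s + ru s) / 2) t
      = -(1 / 4) * (rs t - ru t) ^ 2) ∧
    ((∀ t, rs t ≠ ru t) →
      ∀ t, (-(rs t + ru t) / 2) ^ 2 - V t * (-(rs t + ru t) / 2) + κ₀ t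
        + deriv (fun s => -(rs s + ru s) / 2) t < 0) := by
  have key (t : ℝ) := gaugeCurvature_midpoint (hrs t) (hru t) (heqs t) (hequ t)
  refine ⟨key, fun hne t => (key t).trans_lt ?_⟩
  have hsq : 0 < (rs t - ru t) ^ 2 := sq_pos_of_ne_zero (sub_ne_zero.mpr (hne t))
  linarith
end

section
/- Let r : ℝ → ℝ be continuous and differentiable, V : ℝ → ℝ continuous, and suppose r satisfies the Riccati equation r' = r² + V r + κ for a continuous function κ. If ∫₀^T F(r) dτ with F(r) = r' is rewritten via integration by parts against a density with divergence V (i.e., ∫ r' + r V = boundary terms that vanish on a closed orbit of period T), then ∫₀^T (r² + 2Vr + V²) dτ = −∫₀^T (κ − V²) dτ, i.e., ∫₀^T (r + V)² dτ = −∫₀^T (κ − V²) dτ. In particular ∫₀^T κ dτ ≤ ∫₀^T V² dτ along any period-T closed orbit, with equality iff r = −V on [0,T]. -/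
/-!
Integrating the Riccati equation `r' = r² + V r + κ` over a period kills `∫ r'`, and
completing the square gives `∫₀ᵀ (r + V/2)² = (1/4) ∫₀ᵀ V² - ∫₀ᵀ κ`. The left side is a
nonnegative integral of a continuous function, which vanishes exactly when `r = -V/2` on
`[0, T]`.
-/

open intervalIntegral Set

theorem intervalIntegral.integral_eq_zero_iff_of_continuousOn_of_nonneg
    {f : ℝ → ℝ} {a b : ℝ}
    (hab : a < b) (hfc : ContinuousOn f (Icc a b)) (hf : ∀ t ∈ Icc a b, 0 ≤ f t) :
    ∫ t in a..b, f t = 0 ↔ ∀ t ∈ Icc a b, f t = 0 := by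
  refine ⟨fun hzero => ?_, fun hvanish => ?_⟩
  · by_contra! hne
    obtain ⟨c, hc, hfc0⟩ := hne
    have hpos : ∫ _ in a..b, (0 : ℝ) < ∫ t in a..b, f t :=
      integral_lt_integral_of_continuousOn_of_le_of_exists_lt hab continuousOn_const hfc
        (fun t ht => hf t (Ioc_subset_Icc_self ht)) ⟨c, hc, lt_of_le_of_ne (hf c hc) hfc0.symm⟩
    simp [hzero] at hpos
  · rw [← uIcc_of_le hab.le] at hvanish
    rw [integral_congr (g := fun _ => (0 : ℝ)) hvanish, integral_zero]

theorem intervalIntegral.integral_deriv_eq_zero_of_eq {r : ℝ → ℝ} {a b : ℝ}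
    (hr : ContDiff ℝ 1 r) (hab : r a = r b) : ∫ t in a..b, deriv r t = 0 := by
  rw [integral_deriv_eq_sub (fun t _ => hr.differentiable one_ne_zero t)
    ((hr.continuous_deriv le_rfl).intervalIntegrable _ _), hab, sub_self]

theorem integral_sq_add_half_eq_of_riccati {a b : ℝ} {r V κ : ℝ → ℝ}
    (hr : ContDiff ℝ 1 r) (hV : Continuous V) (hκ : Continuous κ)
    (hric : ∀ t, deriv r t = r t ^ 2 + V t * r t + κ t) (hper : r a = r b) :
    ∫ t in a..b, (r t + V t / 2) ^ 2
      = (1 / 4) * (∫ t in a..b, V t ^ 2) - ∫ t in a..b, κ t := by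
  have hsq : ∀ t, (r t + V t / 2) ^ 2 = deriv r t - (κ t - V t ^ 2 / 4) := fun t => by
    rw [hric t]; ring
  have hκi : IntervalIntegrable κ MeasureTheory.volume a b := hκ.intervalIntegrable _ _
  have hVi : IntervalIntegrable (fun t => V t ^ 2 / 4) MeasureTheory.volume a b :=
    ((hV.pow 2).div_const 4).intervalIntegrable _ _
  simp only [hsq]
  rw [integral_sub ((hr.continuous_deriv le_rfl).intervalIntegrable _ _) (hκi.sub hVi),
    integral_sub hκi hVi, integral_deriv_eq_zero_of_eq hr hper, integral_div]
  ring

/-- Closed-orbit Hopf inequality: if `r' = r² + V r + κ` on `[0,T]` with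
`r 0 = r T`, then `∫₀ᵀ κ ≤ (1/4)∫₀ᵀ V²`, with equality iff `r = -V/2` on `[0,T]`. -/
theorem stmt_17 (T : ℝ) (hT : 0 < T) (r V κ : ℝ → ℝ)
    (hr : ContDiff ℝ 1 r) (hV : Continuous V) (hκ : Continuous κ)
    (hric : ∀ t, deriv r t = r t ^ 2 + V t * r t + κ t)
    (hper : r 0 = r T) :
    (∫ τ in (0:ℝ)..T, κ τ) ≤ (1 / 4) * ∫ τ in (0:ℝ)..T, (V τ) ^ 2 ∧
    ((∫ τ in (0:ℝ)..T, κ τ) = (1 / 4) * (∫ τ in (0:ℝ)..T, (V τ) ^ 2) ↔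
      ∀ t ∈ Set.Icc 0 T, r t = -V t / 2) := by
  have hkey := integral_sq_add_half_eq_of_riccati hr hV hκ hric hper
  have hnonneg : 0 ≤ ∫ t in (0:ℝ)..T, (r t + V t / 2) ^ 2 :=
    integral_nonneg hT.le fun t _ => sq_nonneg _
  have hvanish := integral_eq_zero_iff_of_continuousOn_of_nonneg (f := fun t => (r t + V t / 2) ^ 2)
    hT (by have := hr.continuous; fun_prop) fun t _ => sq_nonneg _
  refine ⟨by linarith, ?_⟩
  calc (∫ τ in (0:ℝ)..T, κ τ) = (1 / 4) * (∫ τ in (0:ℝ)..T, (V τ) ^ 2)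
      ↔ ∫ t in (0:ℝ)..T, (r t + V t / 2) ^ 2 = 0 := by constructor <;> intro h <;> linarith
    _ ↔ ∀ t ∈ Set.Icc 0 T, r t = -V t / 2 := by
      rw [hvanish]
      refine forall₂_congr fun t _ => ?_
      rw [sq_eq_zero_iff, add_eq_zero_iff_eq_neg, neg_div]
end
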